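/- (Conditional Slutsky's theorem.) Let W_n be random variables converging conditionally in distribution given sigma-algebras F_n to a random variable W with continuous CDF, and let a_n, b_n be random variables with a_n -> 1 and b_n -> 0 in probability. Then a_n W_n + b_n converges conditionally in distribution given F_n to W. -/

import Mathlib

/-!
Off the event `Bₙ = {|aₙ - 1| ≥ η} ∪ {|bₙ| ≥ η}` the affine map `w ↦ aₙ w + bₙ` moves the level
`t` by less than `δ`, so conditionally on `Fₙ` the probability of `{aₙ Wₙ + bₙ ≤ t}` is squeezed
between those of `{Wₙ ≤ t - δ}` and `{Wₙ ≤ t + δ}` up to `P[Bₙ | Fₙ]`. The two outer terms converge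
in probability to `G(t ∓ δ)`, where `G` is the CDF of the limit, and these are close to `G(t)` by
continuity of `G`; finally `P[Bₙ | Fₙ] → 0` in `L¹`, hence in probability, because `μ Bₙ → 0`.
-/

open MeasureTheory ProbabilityTheory Filter Topology

lemma exists_pos_sandwich_of_affine_near_id (t : ℝ) {δ : ℝ} (hδ : 0 < δ) :
    ∃ η > 0, ∀ a b w : ℝ, |a - 1| < η → |b| < η →
      (w ≤ t - δ → a * w + b ≤ t) ∧ (a * w + b ≤ t → w ≤ t + δ) := by
  have hden : 0 < |t| + δ + 1 := by positivity
  -- `η (|t| + δ + 1) = δ` absorbs the slope error on `|t| + δ` and the intercept error.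
  set η := δ / (|t| + δ + 1)
  have hηδ : η * (|t| + δ + 1) = δ := div_mul_cancel₀ δ hden.ne'
  refine ⟨η, by positivity, fun a b w ha hb => ?_⟩
  obtain ⟨ha₁, ha₂⟩ := abs_lt.mp ha
  obtain ⟨hb₁, hb₂⟩ := abs_lt.mp hb
  have hη₁ : η < 1 := by nlinarith [abs_nonneg t]
  have hta : |t * (a - 1)| ≤ η * |t| := by
    rw [abs_mul, mul_comm]; exact mul_le_mul_of_nonneg_right ha.le (abs_nonneg t)
  obtain ⟨hta₁, hta₂⟩ := abs_le.mp hta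
  constructor
  · intro hw
    have : a * w ≤ a * (t - δ) := mul_le_mul_of_nonneg_left hw (by linarith)
    nlinarith
  · intro hw
    by_contra! hlt
    have : a * (t + δ) < a * w := mul_lt_mul_of_pos_left hlt (by linarith)
    nlinarith

lemma ContinuousAt.exists_pos_abs_sub_lt {f : ℝ → ℝ} {t ε : ℝ} (hf : ContinuousAt f t)
    (hε : 0 < ε) : ∃ δ > 0, |f (t - δ) - f t| < ε ∧ |f (t + δ) - f t| < ε := by
  obtain ⟨δ, hδ, h⟩ := Metric.continuousAt_iff.mp hf ε hε
  refine ⟨δ / 2, half_pos hδ, h ?_, h ?_⟩ <;>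
    simp [abs_of_pos hδ, half_lt_self hδ]

lemma Set.indicator_one_le_add_of_subset_union {α : Type*} {s u v : Set α} (h : s ⊆ u ∪ v) :
    s.indicator (fun _ => (1 : ℝ)) ≤ u.indicator (fun _ => 1) + v.indicator (fun _ => 1) := by
  intro x
  have hx := @h x
  simp only [Pi.add_apply, Set.indicator]
  split_ifs <;> simp_all

section

variable {Ω : Type*} {m m0 : MeasurableSpace Ω} {μ : Measure Ω}

lemma condExp_indicator_le_add [IsFiniteMeasure μ] {s u v : Set Ω} (hs : MeasurableSet s)
    (hu : MeasurableSet u) (hv : MeasurableSet v) (h : s ⊆ u ∪ v) :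
    μ⟦s | m⟧ ≤ᵐ[μ] μ⟦u | m⟧ + μ⟦v | m⟧ :=
  have hint {w : Set Ω} (hw : MeasurableSet w) : Integrable (w.indicator fun _ => (1 : ℝ)) μ :=
    (integrable_const 1).indicator hw
  (condExp_mono (hint hs) ((hint hu).add (hint hv))
    (.of_forall (Set.indicator_one_le_add_of_subset_union h))).trans_eq
    (condExp_add (hint hu) (hint hv) m)

lemma tendstoInMeasure_condExp_indicator {ι : Type*} {l : Filter ι}
    {m : ι → MeasurableSpace Ω} {B : ι → Set Ω} (hB : Tendsto (fun i => μ (B i)) l (𝓝 0)) :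
    TendstoInMeasure μ (fun i => μ⟦B i | m i⟧) l 0 := by
  refine tendstoInMeasure_of_tendsto_eLpNorm one_ne_zero
    (fun i => integrable_condExp.aestronglyMeasurable) aestronglyMeasurable_zero ?_
  refine tendsto_of_tendsto_of_tendsto_of_le_of_le tendsto_const_nhds hB (fun _ => zero_le)
    fun i => ?_
  calc eLpNorm (μ⟦B i | m i⟧ - 0) 1 μ = eLpNorm (μ⟦B i | m i⟧) 1 μ := by rw [sub_zero]
    _ ≤ eLpNorm ((B i).indicator fun _ => (1 : ℝ)) 1 μ := eLpNorm_condExp_le_eLpNorm _ le_rfl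
    _ ≤ μ (B i) := by simpa using eLpNorm_indicator_const_le (μ := μ) (s := B i) (c := (1 : ℝ)) 1

lemma tendsto_measure_le_abs_sub_of_sandwich {ι : Type*} {l : Filter ι}
    {X L U C : ι → Ω → ℝ} {c cL cU ε : ℝ} (hcL : |cL - c| < ε / 2) (hcU : |cU - c| < ε / 2)
    (hLX : ∀ i, ∀ᵐ ω ∂μ, L i ω ≤ X i ω + C i ω) (hXU : ∀ i, ∀ᵐ ω ∂μ, X i ω ≤ U i ω + C i ω)
    (hL : TendstoInMeasure μ L l fun _ => cL) (hU : TendstoInMeasure μ U l fun _ => cU)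
    (hC : TendstoInMeasure μ C l 0) :
    Tendsto (fun i => μ {ω | ε ≤ |X i ω - c|}) l (𝓝 0) := by
  have hε : 0 < ε / 4 := by linarith [abs_nonneg (cL - c)]
  have hL' := tendstoInMeasure_iff_norm.mp hL (ε / 4) hε
  have hU' := tendstoInMeasure_iff_norm.mp hU (ε / 4) hε
  have hC' := tendstoInMeasure_iff_norm.mp hC (ε / 4) hε
  simp only [Real.norm_eq_abs, Pi.zero_apply, sub_zero] at hL' hU' hC'
  have hbound : ∀ i, μ {ω | ε ≤ |X i ω - c|} ≤ μ {ω | ε / 4 ≤ |L i ω - cL|}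
      + μ {ω | ε / 4 ≤ |U i ω - cU|} + μ {ω | ε / 4 ≤ |C i ω|} := by
    intro i
    refine (measure_mono_ae ?_).trans
      ((measure_union_le _ _).trans (add_le_add_left (measure_union_le _ _) _))
    filter_upwards [hLX i, hXU i] with ω hlo hhi (hω : ε ≤ |X i ω - c|)
    show ω ∈ (_ : Set Ω)
    simp only [Set.mem_union, Set.mem_ofPred_eq]
    by_contra! hsmall
    simp only [abs_lt] at hsmall hcL hcU
    obtain ⟨⟨⟨hL₁, hL₂⟩, hU₁, hU₂⟩, hC₁, hC₂⟩ := hsmall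
    exact hω.not_gt (abs_lt.mpr ⟨by linarith, by linarith⟩)
  refine tendsto_of_tendsto_of_tendsto_of_le_of_le tendsto_const_nhds ?_ (fun _ => zero_le) hbound
  simpa using (hL'.add hU').add hC'

end

theorem stmt_7_general {Ω : Type*} {m0 : MeasurableSpace Ω} (μ : Measure Ω) [IsProbabilityMeasure μ]
    (W : ℕ → Ω → ℝ) (hW : ∀ n, Measurable (W n))
    (a b : ℕ → Ω → ℝ) (ha : ∀ n, Measurable (a n)) (hb : ∀ n, Measurable (b n))
    (F : ℕ → MeasurableSpace Ω)
    (Wlim : Ω → ℝ)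
    (hcont : Continuous (fun t : ℝ => (μ {ω | Wlim ω ≤ t}).toReal))
    (hconv : ∀ t : ℝ, ∀ ε : ℝ, 0 < ε →
      Tendsto (fun n => μ {ω | ε ≤
          |(μ⟦{ω' | W n ω' ≤ t} | F n⟧) ω - (μ {ω' | Wlim ω' ≤ t}).toReal|})
        atTop (nhds 0))
    (ha1 : ∀ ε : ℝ, 0 < ε → Tendsto (fun n => μ {ω | ε ≤ |a n ω - 1|}) atTop (nhds 0))
    (hb0 : ∀ ε : ℝ, 0 < ε → Tendsto (fun n => μ {ω | ε ≤ |b n ω|}) atTop (nhds 0)) :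
    ∀ t : ℝ, ∀ ε : ℝ, 0 < ε →
      Tendsto (fun n => μ {ω | ε ≤
          |(μ⟦{ω' | a n ω' * W n ω' + b n ω' ≤ t} | F n⟧) ω - (μ {ω' | Wlim ω' ≤ t}).toReal|})
        atTop (nhds 0) := by
  intro t ε hε
  obtain ⟨δ, hδ, hcdf_lo, hcdf_hi⟩ := hcont.continuousAt.exists_pos_abs_sub_lt (half_pos hε)
  obtain ⟨η, hη, hshift⟩ := exists_pos_sandwich_of_affine_near_id t hδ
  set B : ℕ → Set Ω := fun n => {ω | η ≤ |a n ω - 1|} ∪ {ω | η ≤ |b n ω|}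
  have hB : ∀ n, MeasurableSet (B n) := fun n =>
    (measurableSet_le measurable_const ((ha n).sub measurable_const).abs).union
      (measurableSet_le measurable_const (hb n).abs)
  have hμB : Tendsto (fun n => μ (B n)) atTop (𝓝 0) :=
    tendsto_of_tendsto_of_tendsto_of_le_of_le tendsto_const_nhds
      (by simpa using (ha1 η hη).add (hb0 η hη)) (fun _ => zero_le) fun n => measure_union_le _ _
  have hshift_off_B : ∀ n, ∀ ω ∉ B n, (W n ω ≤ t - δ → a n ω * W n ω + b n ω ≤ t) ∧
      (a n ω * W n ω + b n ω ≤ t → W n ω ≤ t + δ) := fun n ω hω => by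
    simp only [B, Set.mem_union, Set.mem_ofPred_eq, not_or, not_le] at hω
    exact hshift _ _ _ hω.1 hω.2
  have hW_le : ∀ n s, MeasurableSet {ω | W n ω ≤ s} := fun n s =>
    measurableSet_le (hW n) measurable_const
  have hY_le : ∀ n, MeasurableSet {ω | a n ω * W n ω + b n ω ≤ t} := fun n =>
    measurableSet_le (((ha n).mul (hW n)).add (hb n)) measurable_const
  have hcondW : ∀ s, TendstoInMeasure μ (fun n => μ⟦{ω | W n ω ≤ s} | F n⟧) atTop
      fun _ => (μ {ω | Wlim ω ≤ s}).toReal := fun s =>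
    tendstoInMeasure_iff_norm.mpr (by simpa only [Real.norm_eq_abs] using hconv s)
  refine tendsto_measure_le_abs_sub_of_sandwich hcdf_lo hcdf_hi
    (fun n => condExp_indicator_le_add (hW_le n _) (hY_le n) (hB n) fun ω hω =>
      or_iff_not_imp_right.mpr fun hωB => (hshift_off_B n ω hωB).1 hω)
    (fun n => condExp_indicator_le_add (hY_le n) (hW_le n _) (hB n) fun ω hω =>
      or_iff_not_imp_right.mpr fun hωB => (hshift_off_B n ω hωB).2 hω)
    (hcondW _) (hcondW _) (tendstoInMeasure_condExp_indicator hμB)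

/-- Conditional Slutsky's theorem: if `Wₙ | Fₙ` converges conditionally in distribution to
`W` with continuous CDF, `aₙ → 1` and `bₙ → 0` in probability, then `aₙ Wₙ + bₙ | Fₙ`
converges conditionally in distribution to `W`. -/
theorem stmt_7 {Ω : Type*} {m0 : MeasurableSpace Ω} (μ : Measure Ω) [IsProbabilityMeasure μ]
    (W : ℕ → Ω → ℝ) (hW : ∀ n, Measurable (W n))
    (a b : ℕ → Ω → ℝ) (ha : ∀ n, Measurable (a n)) (hb : ∀ n, Measurable (b n))
    (F : ℕ → MeasurableSpace Ω) (hF : ∀ n, F n ≤ m0)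
    (Wlim : Ω → ℝ) (hWlim : Measurable Wlim)
    (hcont : Continuous (fun t : ℝ => (μ {ω | Wlim ω ≤ t}).toReal))
    (hconv : ∀ t : ℝ, ∀ ε : ℝ, 0 < ε →
      Tendsto (fun n => μ {ω | ε ≤
          |(μ⟦{ω' | W n ω' ≤ t} | F n⟧) ω - (μ {ω' | Wlim ω' ≤ t}).toReal|})
        atTop (nhds 0))
    (ha1 : ∀ ε : ℝ, 0 < ε → Tendsto (fun n => μ {ω | ε ≤ |a n ω - 1|}) atTop (nhds 0))
    (hb0 : ∀ ε : ℝ, 0 < ε → Tendsto (fun n => μ {ω | ε ≤ |b n ω|}) atTop (nhds 0)) :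
    ∀ t : ℝ, ∀ ε : ℝ, 0 < ε →
      Tendsto (fun n => μ {ω | ε ≤
          |(μ⟦{ω' | a n ω' * W n ω' + b n ω' ≤ t} | F n⟧) ω - (μ {ω' | Wlim ω' ≤ t}).toReal|})
        atTop (nhds 0) :=
  stmt_7_general (m0 := m0) μ W hW a b ha hb F Wlim hcont hconv ha1 hb0
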